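/- For any n-ary connectives C₁ and C₂ given by partition sets P₁ and P₂ of {1,…,n}, the main cut-elimination step holds for every cut between the conclusion of any introduction rule for C₁ (applied to A₁,…,Aₙ) and the conclusion of any introduction rule for C₂ (applied to ~A₁,…,~Aₙ) — that is, for all p ∈ P₁ and q ∈ P₂ such a cut can always be replaced by cuts on the pairs A_i, ~A_i yielding a derivation of the same end-sequent from the same premises — if and only if the partition sets P₁ and P₂ are orthogonal. -/

import Mathlib

/-! ## Partitions of `{1,…,n}`, meeting graphs, orthogonality (Danos–Regnier) -/

/-- A partition of `{1,…,n}`, represented as a `Finpartition` of `Fin n`. -/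
abbrev NPartition (n : ℕ) := Finpartition (Finset.univ : Finset (Fin n))

/-- The (simple graph underlying the) meeting graph `G(p,q)` of two partitions of `{1,…,n}`:
its vertices are the classes of `p` together with the classes of `q`, and a class of `p` is
adjacent to a class of `q` iff some `i ∈ {1,…,n}` belongs to both (in the meeting multigraph
there is one edge for each such `i`). -/
def meetingGraph {n : ℕ} (p q : NPartition n) :
    SimpleGraph ({c // c ∈ p.parts} ⊕ {d // d ∈ q.parts}) :=
  SimpleGraph.fromRel fun a b =>
    ∃ (c : {c // c ∈ p.parts}) (d : {d // d ∈ q.parts}),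
      ((c : Finset (Fin n)) ∩ (d : Finset (Fin n))).Nonempty ∧
      a = Sum.inl c ∧ b = Sum.inr d

/-- `p ⊥ q` : the meeting multigraph `G(p,q)` is connected and acyclic.  The meeting
multigraph has exactly `n` edges (one per element of `{1,…,n}`), and a connected multigraph
is acyclic iff its number of edges is exactly one less than its number of vertices; so
`G(p,q)` is connected and acyclic iff it is connected (equivalently, the underlying simple
graph is connected) and `n + 1 = (#classes of p) + (#classes of q)`. -/
def Finpartition.Orthogonal {n : ℕ} (p q : NPartition n) : Prop :=
  (meetingGraph p q).Connected ∧ n + 1 = p.parts.card + q.parts.card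

/-- Orthogonality of two partition sets: `P ⊥ Q` iff `p ⊥ q` for all `p ∈ P`, `q ∈ Q`. -/
def orthSet {n : ℕ} (P Q : Set (NPartition n)) : Prop :=
  ∀ p ∈ P, ∀ q ∈ Q, p.Orthogonal q

/-- `P^⊥`, the maximal partition set orthogonal to `P`. -/
def orthCompl {n : ℕ} (P : Set (NPartition n)) : Set (NPartition n) :=
  {q | ∀ p ∈ P, p.Orthogonal q}

/-- The partition set of `⊗ⁿ` : the single partition of `{1,…,n}` into singleton classes. -/
def IsTensorSet {n : ℕ} (R : Set (NPartition n)) : Prop :=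
  R = {p : NPartition n | ∀ c ∈ p.parts, c.card = 1}

/-- The partition set of `⅋ⁿ` : the single partition of `{1,…,n}` with one class. -/
def IsParSet {n : ℕ} (R : Set (NPartition n)) : Prop :=
  R = {p : NPartition n | p.parts = {Finset.univ}}

/-! ## Generalized multiplicative connectives and the sequent calculus `MLL(Cᵢ)` -/

/-- An `n`-ary generalized (multiplicative) connective `C` together with its dual `C*`:
a pair of nonempty finite partition sets of `{1,…,n}` with `(P_C)^⊥ = P_{C*}` and
`(P_{C*})^⊥ = P_C`.  `rules` is the partition set of the introduction (right) rules of
`C`, and `dualRules` the one of its dual `C*`. -/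
structure GenConn : Type where
  arity : ℕ
  rules : Set (NPartition arity)
  dualRules : Set (NPartition arity)
  rules_nonempty : rules.Nonempty
  rules_finite : rules.Finite
  dualRules_nonempty : dualRules.Nonempty
  dualRules_finite : dualRules.Finite
  orth : orthCompl rules = dualRules
  orth' : orthCompl dualRules = rules

/-- Formulas of `MLL(Cᵢ)`: built from atoms `P` and their duals `~P` by `⊗`, `⅋` and the
generalized connectives `Cᵢ` (with constructor `conn i`) and their duals `Cᵢ*` (with
constructor `dconn i`), where `i` ranges over a signature `I` and `Csig i` records the
arity and the partition sets of `Cᵢ`. -/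
inductive Formula (I : Type) (Csig : I → GenConn) : Type
  | pos : ℕ → Formula I Csig
  | neg : ℕ → Formula I Csig
  | tens : Formula I Csig → Formula I Csig → Formula I Csig
  | parr : Formula I Csig → Formula I Csig → Formula I Csig
  | conn : (i : I) → (Fin (Csig i).arity → Formula I Csig) → Formula I Csig
  | dconn : (i : I) → (Fin (Csig i).arity → Formula I Csig) → Formula I Csig

/-- The dual `~A` of a formula, extended by De Morgan and
`~(Cᵢ(A₁,…,Aₘ)) = Cᵢ*(~A₁,…,~Aₘ)`. -/
def Formula.dual {I : Type} {Csig : I → GenConn} : Formula I Csig → Formula I Csig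
  | .pos m => .neg m
  | .neg m => .pos m
  | .tens A B => .parr A.dual B.dual
  | .parr A B => .tens A.dual B.dual
  | .conn i A => .dconn i fun k => (A k).dual
  | .dconn i A => .conn i fun k => (A k).dual

/-- Provability in the one-sided sequent calculus `MLL(Cᵢ)` (sequents are multisets of
formulas).  The rules are the axiom `⊢ P, ~P` for atomic `P`, the cut rule (allowed only
when `cutEnabled = true`), the `⊗`- and `⅋`-rules of MLL, and, for each generalized
connective `Cᵢ` and each partition `p ∈ P_{Cᵢ}` with classes `c`, the introduction rule
with premises `⊢ Γ_c, A_{c₁},…,A_{cₘ}` (one for each class `c` of `p`) and conclusion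
`⊢ Γ₁,…,Γ_k, Cᵢ(A₁,…,Aₘ)`; dually for `Cᵢ*` using `p ∈ P_{Cᵢ*}`. -/
inductive Provable {I : Type} {Csig : I → GenConn} (cutEnabled : Bool) :
    Multiset (Formula I Csig) → Prop
  | ax (m : ℕ) : Provable cutEnabled {Formula.pos m, Formula.neg m}
  | cut (A : Formula I Csig) (Γ Δ : Multiset (Formula I Csig)) (hcut : cutEnabled = true) :
      Provable cutEnabled (A ::ₘ Γ) → Provable cutEnabled (A.dual ::ₘ Δ) →
      Provable cutEnabled (Γ + Δ)
  | tens (A B : Formula I Csig) (Γ Δ : Multiset (Formula I Csig)) :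
      Provable cutEnabled (A ::ₘ Γ) → Provable cutEnabled (B ::ₘ Δ) →
      Provable cutEnabled (Formula.tens A B ::ₘ (Γ + Δ))
  | parr (A B : Formula I Csig) (Γ : Multiset (Formula I Csig)) :
      Provable cutEnabled (A ::ₘ B ::ₘ Γ) →
      Provable cutEnabled (Formula.parr A B ::ₘ Γ)
  | conn (i : I) (A : Fin (Csig i).arity → Formula I Csig)
      (p : NPartition (Csig i).arity) (hp : p ∈ (Csig i).rules)
      (Γ : {c // c ∈ p.parts} → Multiset (Formula I Csig)) :
      (∀ c : {c // c ∈ p.parts},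
        Provable cutEnabled (Γ c + Multiset.map A (c : Finset (Fin (Csig i).arity)).val)) →
      Provable cutEnabled (Formula.conn i A ::ₘ ∑ c : {c // c ∈ p.parts}, Γ c)
  | dconn (i : I) (A : Fin (Csig i).arity → Formula I Csig)
      (p : NPartition (Csig i).arity) (hp : p ∈ (Csig i).dualRules)
      (Γ : {c // c ∈ p.parts} → Multiset (Formula I Csig)) :
      (∀ c : {c // c ∈ p.parts},
        Provable cutEnabled (Γ c + Multiset.map A (c : Finset (Fin (Csig i).arity)).val)) →
      Provable cutEnabled (Formula.dconn i A ::ₘ ∑ c : {c // c ∈ p.parts}, Γ c)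

/-- Derivations from a set `hyps` of hypothesis sequents using only instances of the cut
rule whose cut formula belongs to `cutFmls`: from `⊢ A, Γ` and `⊢ ~A, Δ` (with
`A ∈ cutFmls`) infer `⊢ Γ, Δ`. -/
inductive CutDeriv {F : Type} (dual : F → F) (cutFmls : Set F)
    (hyps : Set (Multiset F)) : Multiset F → Prop
  | hyp (Γ : Multiset F) : Γ ∈ hyps → CutDeriv dual cutFmls hyps Γ
  | cut (A : F) (Γ Δ : Multiset F) : A ∈ cutFmls →
      CutDeriv dual cutFmls hyps (A ::ₘ Γ) →
      CutDeriv dual cutFmls hyps (dual A ::ₘ Δ) →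
      CutDeriv dual cutFmls hyps (Γ + Δ)

/-!
If `G(p,q)` is a tree, grow a subtree from one class: the sequent obtained so far is cut against
the premise at a new neighbouring class along the connecting edge `i` (a cut on `Aᵢ`). Once all
`n` edges are used, every `Aᵢ` and `~Aᵢ` is gone and `⊢ Γ₁,…,Γ_k, Δ₁,…,Δ_l` remains.

Conversely, take distinct atoms for the `Aᵢ` and a single fresh atom for each `Γ_c` and `Δ_d`.
By induction on a derivation by cuts, the premises it uses form a multiset of vertices that is
connected in `G(p,q)` (a cut on `Aᵢ` joins the two classes containing `i`) and exceeds the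
number of cuts by one. For the end-sequent, the fresh atoms force every premise to be used
exactly once, and then counting formulas forces exactly `n` cuts, so `G(p,q)` is connected with
`n + 1` vertices.
-/

open Finset

namespace Finpartition

variable {n : ℕ}

def classOf (p : NPartition n) (i : Fin n) : {c // c ∈ p.parts} :=
  ⟨p.part i, p.part_mem.2 (mem_univ i)⟩

theorem classOf_eq_iff {p : NPartition n} {i : Fin n} {c : {c // c ∈ p.parts}} :
    p.classOf i = c ↔ i ∈ (c : Finset (Fin n)) := by
  rw [classOf, Subtype.ext_iff]
  exact p.part_eq_iff_mem c.2

end Finpartition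

open Finpartition

section MeetingGraph

variable {n : ℕ} {p q : NPartition n}

local notation "V" => {c // c ∈ p.parts} ⊕ {d // d ∈ q.parts}

def vertexClass (p q : NPartition n) : {c // c ∈ p.parts} ⊕ {d // d ∈ q.parts} → Finset (Fin n) :=
  Sum.elim Subtype.val Subtype.val

theorem mem_vertexClass_iff {i : Fin n} {v : V} :
    i ∈ vertexClass p q v ↔ v = .inl (p.classOf i) ∨ v = .inr (q.classOf i) := by
  cases v <;> simp [vertexClass, eq_comm (b := classOf _ i), classOf_eq_iff]

theorem eq_or_eq_of_mem_vertexClass {i : Fin n} {a b v : V} (ha : i ∈ vertexClass p q a)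
    (hb : i ∈ vertexClass p q b) (hab : a ≠ b) (hv : i ∈ vertexClass p q v) : v = a ∨ v = b := by
  rw [mem_vertexClass_iff] at ha hb hv
  grind

theorem sum_card_vertexClass : ∑ v : V, (vertexClass p q v).card = 2 * n := by
  simp only [Fintype.sum_sum_type, vertexClass, Sum.elim_inl, Sum.elim_inr, sum_coe_sort,
    sum_card_parts, card_univ, Fintype.card_fin]
  ring

theorem meetingGraph_adj_iff {a b : V} :
    (meetingGraph p q).Adj a b ↔ a ≠ b ∧ ∃ i, i ∈ vertexClass p q a ∧ i ∈ vertexClass p q b := by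
  constructor
  · rw [meetingGraph, SimpleGraph.fromRel_adj]
    rintro ⟨hab, ⟨c, d, ⟨i, hi⟩, rfl, rfl⟩ | ⟨c, d, ⟨i, hi⟩, rfl, rfl⟩⟩ <;>
      simp only [mem_inter] at hi
    · exact ⟨hab, i, hi.1, hi.2⟩
    · exact ⟨hab, i, hi.2, hi.1⟩
  · rintro ⟨hab, i, ha, hb⟩
    have hi : ((p.classOf i : Finset (Fin n)) ∩ q.classOf i).Nonempty :=
      ⟨i, by simp [← classOf_eq_iff]⟩
    rw [meetingGraph, SimpleGraph.fromRel_adj]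
    rw [mem_vertexClass_iff] at ha hb
    rcases ha with rfl | rfl <;> rcases hb with rfl | rfl
    · exact absurd rfl hab
    · exact ⟨hab, .inl ⟨_, _, hi, rfl, rfl⟩⟩
    · exact ⟨hab, .inr ⟨_, _, hi, rfl, rfl⟩⟩
    · exact absurd rfl hab

end MeetingGraph

section Premises

variable {n : ℕ} {p q : NPartition n} {F : Type} (dual : F → F) (A : Fin n → F)
  (Γ : {c // c ∈ p.parts} → Multiset F) (Δ : {d // d ∈ q.parts} → Multiset F)

local notation "V" => {c // c ∈ p.parts} ⊕ {d // d ∈ q.parts}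

def edgeFormula : {c // c ∈ p.parts} ⊕ {d // d ∈ q.parts} → Fin n → F :=
  Sum.elim (fun _ => A) (fun _ i => dual (A i))

/-- `residualPremise ∅ v` is the premise `⊢ Γ_c, A_{c₁},…` (or `⊢ Δ_d, ~A_{d₁},…`) at the class `v`;
for `S ≠ ∅` the formulas of the edges in `S` are removed. -/
def residualPremise (S : Finset (Fin n)) (v : {c // c ∈ p.parts} ⊕ {d // d ∈ q.parts}) :
    Multiset F :=
  Sum.elim Γ Δ v + (vertexClass p q v \ S).val.map (edgeFormula dual A v)

theorem range_residualPremise_empty :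
    Set.range (residualPremise dual A Γ Δ ∅) =
      (Set.range fun c : {c // c ∈ p.parts} => Γ c + Multiset.map A (c : Finset (Fin n)).val) ∪
        Set.range fun d : {d // d ∈ q.parts} =>
          Δ d + Multiset.map (fun i => dual (A i)) (d : Finset (Fin n)).val := by
  rw [← Set.Sum.elim_range]
  congr
  ext (c | d) <;> simp [residualPremise, vertexClass, edgeFormula]

/-- The conclusion of cutting the premises at the vertices of a subtree `U` of `G(p,q)` along its
edges `S`. -/
def cutSequent (U : Finset V) (S : Finset (Fin n)) : Multiset F :=
  ∑ v ∈ U, residualPremise dual A Γ Δ S v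

variable {dual A Γ Δ}

theorem residualPremise_eq_cons {S : Finset (Fin n)} {v : V} {i : Fin n}
    (hi : i ∈ vertexClass p q v) (hiS : i ∉ S) :
    residualPremise dual A Γ Δ S v =
      edgeFormula dual A v i ::ₘ residualPremise dual A Γ Δ (insert i S) v := by
  have hmem : i ∈ (vertexClass p q v \ S).val := mem_sdiff.2 ⟨hi, hiS⟩
  rw [residualPremise, residualPremise, sdiff_insert, erase_val, ← Multiset.cons_erase hmem,
    Multiset.map_cons, Multiset.add_cons, Multiset.erase_cons_head]

theorem residualPremise_insert_of_notMem {S : Finset (Fin n)} {v : V} {i : Fin n}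
    (hi : i ∉ vertexClass p q v) :
    residualPremise dual A Γ Δ (insert i S) v = residualPremise dual A Γ Δ S v := by
  rw [residualPremise, residualPremise, sdiff_insert_of_notMem hi]

theorem residualPremise_of_disjoint {S : Finset (Fin n)} {v : V}
    (h : Disjoint (vertexClass p q v) S) :
    residualPremise dual A Γ Δ S v = residualPremise dual A Γ Δ ∅ v := by
  rw [residualPremise, residualPremise, sdiff_eq_self_of_disjoint h, sdiff_empty]

theorem residualPremise_univ (v : V) :
    residualPremise dual A Γ Δ univ v = Sum.elim Γ Δ v := by
  rw [residualPremise, sdiff_eq_empty_iff_subset.2 (subset_univ _), empty_val, Multiset.map_zero,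
    add_zero]

theorem cutDeriv_add_of_edgeFormula {H : Set (Multiset F)} {X Y : Multiset F} {i : Fin n} {a b : V}
    (ha : i ∈ vertexClass p q a) (hb : i ∈ vertexClass p q b) (hab : a ≠ b)
    (hX : CutDeriv dual {B | ∃ i, B = A i} H (edgeFormula dual A a i ::ₘ X))
    (hY : CutDeriv dual {B | ∃ i, B = A i} H (edgeFormula dual A b i ::ₘ Y)) :
    CutDeriv dual {B | ∃ i, B = A i} H (X + Y) := by
  rw [mem_vertexClass_iff] at ha hb
  rcases ha with rfl | rfl <;> rcases hb with rfl | rfl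
  · exact absurd rfl hab
  · exact .cut _ _ _ ⟨i, rfl⟩ hX hY
  · exact add_comm Y X ▸ .cut _ _ _ ⟨i, rfl⟩ hY hX
  · exact absurd rfl hab

theorem cutSequent_eq_cons {U : Finset V} {S : Finset (Fin n)} {a : V} {i : Fin n} (haU : a ∈ U)
    (ha : i ∈ vertexClass p q a) (hiS : i ∉ S) (hU : ∀ v ∈ U, i ∈ vertexClass p q v → v = a) :
    cutSequent dual A Γ Δ U S = edgeFormula dual A a i ::ₘ cutSequent dual A Γ Δ U (insert i S) := by
  have hrest : ∑ v ∈ U.erase a, residualPremise dual A Γ Δ S v =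
      ∑ v ∈ U.erase a, residualPremise dual A Γ Δ (insert i S) v := by
    refine sum_congr rfl fun v hv => (residualPremise_insert_of_notMem fun hi => ?_).symm
    exact (mem_erase.1 hv).1 (hU v (mem_of_mem_erase hv) hi)
  rw [cutSequent, cutSequent, ← add_sum_erase U _ haU, ← add_sum_erase U _ haU, hrest,
    residualPremise_eq_cons ha hiS, Multiset.cons_add]

theorem cutDeriv_cutSequent_insert {U : Finset V} {S : Finset (Fin n)} {a b : V} {i : Fin n}
    (hS : ∀ j ∈ S, ∀ v, j ∈ vertexClass p q v → v ∈ U) (haU : a ∈ U) (hbU : b ∉ U)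
    (ha : i ∈ vertexClass p q a) (hb : i ∈ vertexClass p q b)
    (hD : CutDeriv dual {B | ∃ i, B = A i} (Set.range (residualPremise dual A Γ Δ ∅))
      (cutSequent dual A Γ Δ U S)) :
    CutDeriv dual {B | ∃ i, B = A i} (Set.range (residualPremise dual A Γ Δ ∅))
      (cutSequent dual A Γ Δ (insert b U) (insert i S)) := by
  have hab : a ≠ b := ne_of_mem_of_not_mem haU hbU
  have hiS : i ∉ S := fun hi => hbU (hS i hi b hb)
  have hU (v) (hv : v ∈ U) (hi : i ∈ vertexClass p q v) : v = a :=
    (eq_or_eq_of_mem_vertexClass ha hb hab hi).resolve_right (ne_of_mem_of_not_mem hv hbU)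
  have hbS : Disjoint (vertexClass p q b) S := disjoint_left.2 fun j hj hjS => hbU (hS j hjS b hj)
  have hpremise : residualPremise dual A Γ Δ ∅ b =
      edgeFormula dual A b i ::ₘ residualPremise dual A Γ Δ (insert i S) b := by
    rw [← residualPremise_of_disjoint hbS, residualPremise_eq_cons hb hiS]
  rw [cutSequent, sum_insert hbU, add_comm, ← cutSequent]
  exact cutDeriv_add_of_edgeFormula ha hb hab (cutSequent_eq_cons haU ha hiS hU ▸ hD)
    (hpremise ▸ .hyp _ ⟨b, rfl⟩)

theorem exists_cutDeriv_cutSequent (hconn : (meetingGraph p q).Connected) {k : ℕ} (hk : 1 ≤ k)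
    (hkV : k ≤ Fintype.card V) : ∃ (U : Finset V) (S : Finset (Fin n)), #U = k ∧ #S + 1 = k ∧
      (∀ j ∈ S, ∀ v, j ∈ vertexClass p q v → v ∈ U) ∧
      CutDeriv dual {B | ∃ i, B = A i} (Set.range (residualPremise dual A Γ Δ ∅))
        (cutSequent dual A Γ Δ U S) := by
  induction k, hk using Nat.le_induction with
  | base =>
    obtain ⟨v⟩ := hconn.nonempty
    refine ⟨{v}, ∅, card_singleton v, rfl, by simp, ?_⟩
    rw [cutSequent, sum_singleton]
    exact .hyp _ ⟨v, rfl⟩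
  | succ k hk ih =>
    obtain ⟨U, S, hUk, hSk, hS, hD⟩ := ih (by omega)
    obtain ⟨u, hu⟩ := card_pos.1 (show 0 < #U by omega)
    obtain ⟨w, hw⟩ : ∃ w, w ∉ U := by
      by_contra! h
      rw [eq_univ_of_forall h, card_univ] at hUk
      omega
    obtain ⟨⟨⟨a, b⟩, hadj⟩, -, haU, hbU⟩ :=
      (hconn.preconnected u w).some.exists_boundary_dart (U : Set V) hu hw
    obtain ⟨-, i, ha, hb⟩ := meetingGraph_adj_iff.1 hadj
    have hiS : i ∉ S := fun hi => hbU (hS i hi b hb)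
    refine ⟨insert b U, insert i S, by rw [card_insert_of_notMem hbU, hUk],
      by rw [card_insert_of_notMem hiS, hSk], fun j hj v hv => ?_,
      cutDeriv_cutSequent_insert hS haU hbU ha hb hD⟩
    rcases mem_insert.1 hj with rfl | hj
    · rcases eq_or_eq_of_mem_vertexClass ha hb (ne_of_mem_of_not_mem haU hbU) hv with rfl | rfl
      · exact mem_insert_of_mem haU
      · exact mem_insert_self _ _
    · exact mem_insert_of_mem (hS j hj v hv)

theorem cutSequent_univ_univ :
    cutSequent dual A Γ Δ univ univ = ∑ c, Γ c + ∑ d, Δ d := by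
  simp only [cutSequent, residualPremise_univ, Fintype.sum_sum_type, Sum.elim_inl, Sum.elim_inr]

theorem cutDeriv_of_orthogonal (h : p.Orthogonal q) :
    CutDeriv dual {B | ∃ i, B = A i} (Set.range (residualPremise dual A Γ Δ ∅))
      (∑ c, Γ c + ∑ d, Δ d) := by
  obtain ⟨hconn, hcard⟩ := h
  have hV : Fintype.card V = n + 1 := by simp [hcard]
  obtain ⟨U, S, hU, hS, -, hD⟩ := exists_cutDeriv_cutSequent (dual := dual) (A := A) (Γ := Γ)
    (Δ := Δ) hconn (k := Fintype.card V) (by omega) le_rfl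
  rwa [eq_univ_of_card U hU, eq_univ_of_card S (by simp; omega), cutSequent_univ_univ] at hD

end Premises

theorem CutDeriv.exists_connected_premises {F : Type} {V ι : Type*} {dual : F → F} {A : ι → F}
    {premise : V → Multiset F} {G : SimpleGraph V}
    (hG : ∀ i v w, A i ∈ premise v → dual (A i) ∈ premise w → G.Reachable v w) {S : Multiset F}
    (h : CutDeriv dual {B | ∃ i, B = A i} (Set.range premise) S) :
    ∃ (L : Multiset V) (E : Multiset ι), Multiset.card L = Multiset.card E + 1 ∧
      L.bind premise = S + E.map A + E.map (dual ∘ A) ∧ ∀ v ∈ L, ∀ w ∈ L, G.Reachable v w := by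
  induction h with
  | hyp _ hS =>
    obtain ⟨v, rfl⟩ := hS
    exact ⟨{v}, 0, rfl, by simp, by simp⟩
  | cut _ Γ Δ hB _ _ ih₁ ih₂ =>
    obtain ⟨i, rfl⟩ := hB
    obtain ⟨L₁, E₁, hcard₁, hL₁, hr₁⟩ := ih₁
    obtain ⟨L₂, E₂, hcard₂, hL₂, hr₂⟩ := ih₂
    obtain ⟨v, hv, hAv⟩ := Multiset.mem_bind.1 (hL₁ ▸ by simp : A i ∈ L₁.bind premise)
    obtain ⟨w, hw, hAw⟩ := Multiset.mem_bind.1 (hL₂ ▸ by simp : dual (A i) ∈ L₂.bind premise)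
    have hr (x) (hx : x ∈ L₁) (y) (hy : y ∈ L₂) : G.Reachable x y :=
      ((hr₁ x hx v hv).trans (hG i v w hAv hAw)).trans (hr₂ w hw y hy)
    refine ⟨L₁ + L₂, i ::ₘ (E₁ + E₂), by simp [hcard₁, hcard₂]; omega, ?_, ?_⟩
    · simp only [Multiset.add_bind, hL₁, hL₂, ← Multiset.singleton_add, Multiset.map_add,
        Multiset.map_singleton, Function.comp_apply]
      abel
    · simp only [Multiset.mem_add]
      rintro x (hx | hx) y (hy | hy)
      exacts [hr₁ x hx y hy, hr x hx y hy, (hr y hy x hx).symm, hr₂ x hx y hy]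

section Generic

variable {n : ℕ} {p q : NPartition n}

local notation "V" => {c // c ∈ p.parts} ⊕ {d // d ∈ q.parts}

abbrev GenericFormula : Type := Formula Empty Empty.elim

def genericAtom (i : Fin n) : GenericFormula := .pos i

/-- A fresh atom for each vertex: the offset `n` keeps it apart from every `genericAtom i`. -/
noncomputable def markAtom (p q : NPartition n) (v : {c // c ∈ p.parts} ⊕ {d // d ∈ q.parts}) :
    GenericFormula :=
  .pos (n + Fintype.equivFin _ v)

theorem markAtom_injective : Function.Injective (markAtom p q) := fun v w h => by
  simpa [markAtom, Fin.val_inj] using h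

noncomputable def markedPremise (p q : NPartition n)
    (v : {c // c ∈ p.parts} ⊕ {d // d ∈ q.parts}) : Multiset GenericFormula :=
  residualPremise Formula.dual genericAtom (fun c => {markAtom p q (.inl c)})
    (fun d => {markAtom p q (.inr d)}) ∅ v

theorem eq_inl_of_genericAtom_mem {i : Fin n} {v : V}
    (h : genericAtom i ∈ markedPremise p q v) : v = .inl (p.classOf i) := by
  cases v <;> simp [markedPremise, residualPremise, edgeFormula, genericAtom, markAtom,
    vertexClass, Formula.dual, Fin.val_inj] at h
  · obtain h | h := h
    · omega
    · exact congrArg _ (classOf_eq_iff.2 h).symm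
  · omega

theorem eq_inr_of_dual_genericAtom_mem {i : Fin n} {v : V}
    (h : (genericAtom i).dual ∈ markedPremise p q v) : v = .inr (q.classOf i) := by
  cases v <;> simp [markedPremise, residualPremise, edgeFormula, genericAtom, markAtom,
    vertexClass, Formula.dual, Fin.val_inj] at h
  exact congrArg _ (classOf_eq_iff.2 h).symm

theorem markedPremise_eq (v : V) : markedPremise p q v =
    {markAtom p q v} + (vertexClass p q v).val.map (edgeFormula Formula.dual genericAtom v) := by
  cases v <;> simp [markedPremise, residualPremise]

theorem genericAtom_ne_markAtom (i : Fin n) (v : V) : genericAtom i ≠ markAtom p q v := by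
  simp only [genericAtom, markAtom, ne_eq, Formula.pos.injEq]
  omega

theorem dual_genericAtom_ne_markAtom (i : Fin n) (v : V) :
    (genericAtom i).dual ≠ markAtom p q v :=
  nofun

theorem edgeFormula_ne_markAtom (w : V) (i : Fin n) (v : V) :
    edgeFormula Formula.dual genericAtom w i ≠ markAtom p q v := by
  cases w
  exacts [genericAtom_ne_markAtom i v, dual_genericAtom_ne_markAtom i v]

theorem sum_markAtom :
    ∑ c, {markAtom p q (.inl c)} + ∑ d, {markAtom p q (.inr d)} = univ.val.map (markAtom p q) := by
  rw [← Fintype.sum_sum_type (f := fun v => ({markAtom p q v} : Multiset GenericFormula)),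
    sum_eq_multiset_sum, ← Multiset.sum_map_singleton (univ.val.map (markAtom p q)),
    Multiset.map_map]
  rfl

theorem orthogonal_of_cutDeriv
    (h : CutDeriv Formula.dual {B | ∃ i : Fin n, B = genericAtom i} (Set.range (markedPremise p q))
      (∑ c, {markAtom p q (.inl c)} + ∑ d, {markAtom p q (.inr d)})) :
    p.Orthogonal q := by
  classical
  have hG (i : Fin n) (v w : V) (hv : genericAtom i ∈ markedPremise p q v)
      (hw : (genericAtom i).dual ∈ markedPremise p q w) : (meetingGraph p q).Reachable v w := by
    rw [eq_inl_of_genericAtom_mem hv, eq_inr_of_dual_genericAtom_mem hw]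
    exact (meetingGraph_adj_iff.2 ⟨Sum.inl_ne_inr, i, by simp [mem_vertexClass_iff]⟩).reachable
  obtain ⟨L, E, hcard, hL, hr⟩ := h.exists_connected_premises hG
  simp only [markedPremise_eq, Multiset.bind_add, Multiset.bind_singleton, sum_markAtom] at hL
  have hLuniv : L = univ.val := by
    ext v
    have := congrArg (Multiset.count (markAtom p q v)) hL
    simpa [Multiset.count_map_eq_count' _ _ markAtom_injective, Multiset.count_eq_zero,
      edgeFormula_ne_markAtom, genericAtom_ne_markAtom, dual_genericAtom_ne_markAtom] using this
  rw [hLuniv, add_assoc, add_right_inj] at hL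
  have hE : Multiset.card E = n := by
    have := congrArg Multiset.card hL
    simp only [Multiset.card_bind, Multiset.card_add, Multiset.card_map, Function.comp_def,
      card_val, ← sum_eq_multiset_sum, sum_card_vertexClass] at this
    omega
  have hV : Multiset.card L = #p.parts + #q.parts := by
    rw [hLuniv, card_val, card_univ, Fintype.card_sum, Fintype.card_coe, Fintype.card_coe]
  obtain ⟨v, -⟩ := Multiset.card_pos_iff_exists_mem.1 (show 0 < Multiset.card L by omega)
  refine ⟨(SimpleGraph.connected_iff _).2 ⟨fun u w => hr u ?_ w ?_, ⟨v⟩⟩, by omega⟩ <;>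
    simp [hLuniv]

end Generic

/-- **Danos–Regnier's Lemma 1 (main cut-elimination step iff orthogonality).**
For any `n`-ary connectives `C₁` and `C₂` given by partition sets `P₁` and `P₂` of
`{1,…,n}`, the main cut-elimination step holds for every cut between the conclusion
`C₁(A₁,…,Aₙ)` of any introduction rule `p ∈ P₁` (with premises `⊢ Γ_c, A_{c₁},…,A_{cₘ}`
for the classes `c` of `p`) and the conclusion `C₂(~A₁,…,~Aₙ)` of any introduction rule
`q ∈ P₂` (with premises `⊢ Δ_d, ~A_{d₁},…,~A_{dₘ}` for the classes `d` of `q`) — that is,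
such a cut can always be replaced by cuts on the pairs `Aᵢ, ~Aᵢ` yielding a derivation of
the same end-sequent `⊢ Γ₁,…,Γ_k, Δ₁,…,Δ_l` from the same premises — if and only if the
partition sets `P₁` and `P₂` are orthogonal. -/
theorem main_cut_step_iff_orthogonal {n : ℕ} (P₁ P₂ : Set (NPartition n)) :
    (∀ (I : Type) (Csig : I → GenConn) (A : Fin n → Formula I Csig),
      ∀ p ∈ P₁, ∀ q ∈ P₂,
      ∀ (Γ : {c // c ∈ p.parts} → Multiset (Formula I Csig))
        (Δ : {d // d ∈ q.parts} → Multiset (Formula I Csig)),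
        CutDeriv Formula.dual {B | ∃ i, B = A i}
          ((Set.range fun c : {c // c ∈ p.parts} =>
              Γ c + Multiset.map A (c : Finset (Fin n)).val) ∪
           (Set.range fun d : {d // d ∈ q.parts} =>
              Δ d + Multiset.map (fun i => (A i).dual) (d : Finset (Fin n)).val))
          ((∑ c : {c // c ∈ p.parts}, Γ c) + ∑ d : {d // d ∈ q.parts}, Δ d)) ↔
    orthSet P₁ P₂ := by
  constructor
  · intro h p hp q hq
    refine orthogonal_of_cutDeriv ?_
    have hpq := h Empty Empty.elim genericAtom p hp q hq (fun c => {markAtom p q (.inl c)})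
      (fun d => {markAtom p q (.inr d)})
    rwa [← range_residualPremise_empty] at hpq
  · intro h I Csig A p hp q hq Γ Δ
    rw [← range_residualPremise_empty]
    exact cutDeriv_of_orthogonal (h p hp q hq)
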